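/- If M is an individual-rational and uniform matching between bids B = b::B' and asks A = a::A' (with b the most competitive bid and a the most competitive ask, both lists sorted by competitiveness) such that Q(M) ≥ min(q_b, q_a), then there exists an individual-rational and uniform matching M' between B and A such that Q(M') = Q(M) and the total traded quantity between b and a in M' equals min(q_b, q_a). -/

import Mathlib

structure Bid where
  id : ℕ
  timestamp : ℕ
  quantity : ℕ
  price : ℕ
deriving DecidableEq

structure Ask where
  id : ℕ
  timestamp : ℕ
  quantity : ℕ
  price : ℕ
deriving DecidableEq

structure Transaction where
  bid : Bid
  ask : Ask
  quantity : ℕ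
  price : ℕ
deriving DecidableEq

/-- Total traded quantity of a list of transactions. -/
def Qty (M : List Transaction) : ℕ := (M.map Transaction.quantity).sum

/-- Total traded quantity of bid `b` in `M`. -/
def QtyBid (b : Bid) (M : List Transaction) : ℕ :=
  ((M.filter (fun m => m.bid == b)).map Transaction.quantity).sum

/-- Total traded quantity of ask `a` in `M`. -/
def QtyAsk (a : Ask) (M : List Transaction) : ℕ :=
  ((M.filter (fun m => m.ask == a)).map Transaction.quantity).sum

/-- Total traded quantity between bid `b` and ask `a` in `M`. -/
def QtyBidAsk (b : Bid) (a : Ask) (M : List Transaction) : ℕ :=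
  ((M.filter (fun m => m.bid == b && m.ask == a)).map Transaction.quantity).sum

/-- Sum of quantities of a list of bids. -/
def QB (B : List Bid) : ℕ := (B.map Bid.quantity).sum

/-- Sum of quantities of a list of asks. -/
def QA (A : List Ask) : ℕ := (A.map Ask.quantity).sum

/-- `M` is a matching between bids `B` and asks `A`. -/
def Matching (B : List Bid) (A : List Ask) (M : List Transaction) : Prop :=
  (∀ m ∈ M, m.ask.price ≤ m.bid.price) ∧
  (∀ m ∈ M, m.bid ∈ B) ∧
  (∀ m ∈ M, m.ask ∈ A) ∧
  (∀ b ∈ B, QtyBid b M ≤ b.quantity) ∧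
  (∀ a ∈ A, QtyAsk a M ≤ a.quantity)

/-- Individual rationality. -/
def IsIR (M : List Transaction) : Prop :=
  ∀ m ∈ M, m.ask.price ≤ m.price ∧ m.price ≤ m.bid.price

/-- Uniformity: all trade prices equal. -/
def IsUniform (M : List Transaction) : Prop :=
  ∀ m1 ∈ M, ∀ m2 ∈ M, m1.price = m2.price

/-- `b1` is more competitive than `b2`. -/
def MoreCompetitiveBid (b1 b2 : Bid) : Prop :=
  b2.price < b1.price ∨ (b1.price = b2.price ∧ b1.timestamp < b2.timestamp)

/-- `a1` is more competitive than `a2`. -/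
def MoreCompetitiveAsk (a1 a2 : Ask) : Prop :=
  a1.price < a2.price ∨ (a1.price = a2.price ∧ a1.timestamp < a2.timestamp)

def FairOnBids (B : List Bid) (M : List Transaction) : Prop :=
  ∀ b1 ∈ B, ∀ b2 ∈ B, MoreCompetitiveBid b1 b2 → 1 ≤ QtyBid b2 M →
    QtyBid b1 M = b1.quantity

def FairOnAsks (A : List Ask) (M : List Transaction) : Prop :=
  ∀ a1 ∈ A, ∀ a2 ∈ A, MoreCompetitiveAsk a1 a2 → 1 ≤ QtyAsk a2 M →
    QtyAsk a1 M = a1.quantity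

def IsFair (B : List Bid) (A : List Ask) (M : List Transaction) : Prop :=
  FairOnBids B M ∧ FairOnAsks A M

/-- "at least as competitive as" order on bids (for sorting, most competitive first). -/
def BidGE (b1 b2 : Bid) : Prop := ¬ MoreCompetitiveBid b2 b1

/-- "at least as competitive as" order on asks (for sorting, most competitive first). -/
def AskGE (a1 a2 : Ask) : Prop := ¬ MoreCompetitiveAsk a2 a1

/-! Cut every transaction of `M` into unit trades, giving a list of bid units and a list of ask
units, both of length `Q(M)`. Put `b` at the front of the bid units with multiplicity
`max(Q_b(M), q)`, where `q = min(q_b, q_a)`, dropping other units from the back, do the same for `a`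
among the ask units, and zip the two lists at the common price of `M`. Since
`min(Q_b(M), Q_a(M)) ≤ q`, one of `b`, `a` occurs exactly `q` times, so the two meet exactly `q`
times; individual rationality survives because every other order in the new matching already
traded at that price and `b`, `a` are the most competitive orders. -/

namespace List

variable {α β : Type*} [DecidableEq α] [DecidableEq β]

def prioritize (x : α) (k : ℕ) (U : List α) : List α :=
  replicate k x ++ (U.filter (· ≠ x)).take (U.length - k)

theorem length_prioritize {x : α} {k : ℕ} {U : List α} (hxk : U.count x ≤ k)
    (hk : k ≤ U.length) : (U.prioritize x k).length = U.length := by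
  have hsplit := U.length_eq_countP_add_countP (· == x)
  simp only [count_eq_countP] at hxk
  simp only [prioritize, length_append, length_replicate, length_take, ← countP_eq_length_filter]
  have : U.countP (· ≠ x) = U.countP fun a => decide ¬(a == x) = true := by
    congr 1; funext a; simp
  omega

theorem not_mem_prioritize_tail (x : α) (k : ℕ) (U : List α) :
    x ∉ (U.filter (· ≠ x)).take (U.length - k) := fun h => by
  simpa using (mem_filter.1 (mem_of_mem_take h)).2

theorem count_prioritize_self (x : α) (k : ℕ) (U : List α) :
    (U.prioritize x k).count x = k := by
  rw [prioritize, count_append, count_eq_zero.2 (not_mem_prioritize_tail x k U),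
    count_replicate_self, add_zero]

theorem count_prioritize_of_ne {x y : α} (hyx : y ≠ x) (k : ℕ) (U : List α) :
    (U.prioritize x k).count y ≤ U.count y := by
  simp only [prioritize, count_append, count_replicate, beq_iff_eq, Ne.symm hyx, if_false, zero_add]
  exact ((take_sublist _ _).trans filter_sublist).count_le y

theorem mem_prioritize {x y : α} {k : ℕ} {U : List α} (h : y ∈ U.prioritize x k) :
    y = x ∨ y ∈ U := by
  rcases mem_append.1 h with h | h
  · exact .inl (eq_of_mem_replicate h)
  · exact .inr (mem_of_mem_filter (mem_of_mem_take h))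

theorem countP_zip_replicate_append (x : α) (y : β) {X : List α} {Y : List β} (hX : x ∉ X)
    (hY : y ∉ Y) (m n : ℕ) :
    ((replicate m x ++ X).zip (replicate n y ++ Y)).countP (fun z => z.1 == x && z.2 == y)
      = min m n := by
  induction m generalizing n with
  | zero =>
    refine countP_eq_zero.2 fun z hz => ?_
    simp only [Bool.and_eq_true, beq_iff_eq, not_and]
    rintro rfl
    exact absurd (of_mem_zip hz).1 hX
  | succ m ih =>
    cases n with
    | zero =>
      refine countP_eq_zero.2 fun z hz => ?_
      simp only [Bool.and_eq_true, beq_iff_eq, not_and]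
      rintro - rfl
      exact absurd (of_mem_zip hz).2 hY
    | succ n => simp [replicate_succ, ih, Nat.succ_min_succ]

theorem countP_zip_prioritize (x : α) (y : β) (m n : ℕ) (U : List α) (V : List β) :
    ((U.prioritize x m).zip (V.prioritize y n)).countP (fun z => z.1 == x && z.2 == y)
      = min m n :=
  countP_zip_replicate_append x y (not_mem_prioritize_tail x m U)
    (not_mem_prioritize_tail y n V) m n

end List

def units {γ : Type*} (f : Transaction → γ) (M : List Transaction) : List γ :=
  M.flatMap fun m => List.replicate m.quantity (f m)

section Units

variable {γ : Type*} (f : Transaction → γ) (M : List Transaction)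

theorem length_units : (units f M).length = Qty M := by
  simp [units, Qty, List.length_flatMap]

theorem count_units [DecidableEq γ] (x : γ) :
    (units f M).count x = ((M.filter (f · == x)).map Transaction.quantity).sum := by
  induction M with
  | nil => rfl
  | cons m M ih =>
    by_cases h : f m = x <;> simp_all [units, List.count_replicate]

theorem exists_of_mem_units {x : γ} (h : x ∈ units f M) : ∃ m ∈ M, f m = x := by
  obtain ⟨m, hm, hx⟩ := List.mem_flatMap.1 h
  exact ⟨m, hm, (List.eq_of_mem_replicate hx).symm⟩

end Units

def unitTrades (p : ℕ) (U : List Bid) (V : List Ask) : List Transaction :=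
  (U.zip V).map fun uv => ⟨uv.1, uv.2, 1, p⟩

section UnitTrades

variable (p : ℕ) (U : List Bid) (V : List Ask)

theorem mem_unitTrades {m : Transaction} (hm : m ∈ unitTrades p U V) :
    m.bid ∈ U ∧ m.ask ∈ V ∧ m.price = p := by
  obtain ⟨⟨x, y⟩, hxy, rfl⟩ := List.mem_map.1 hm
  exact ⟨(List.of_mem_zip hxy).1, (List.of_mem_zip hxy).2, rfl⟩

theorem sum_quantity_filter_unitTrades (P : Transaction → Bool) :
    (((unitTrades p U V).filter P).map Transaction.quantity).sum =
      (unitTrades p U V).countP P := by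
  have hone : ∀ m ∈ (unitTrades p U V).filter P, m.quantity = 1 := fun m hm => by
    obtain ⟨uv, -, rfl⟩ := List.mem_map.1 (List.mem_of_mem_filter hm)
    rfl
  rw [List.map_congr_left hone, List.map_const', List.sum_replicate, smul_eq_mul, mul_one,
    List.countP_eq_length_filter]

theorem qty_unitTrades (h : U.length = V.length) : Qty (unitTrades p U V) = U.length := by
  simpa [Qty, unitTrades, h] using sum_quantity_filter_unitTrades p U V fun _ => true

theorem qtyBid_unitTrades (h : U.length ≤ V.length) (x : Bid) :
    QtyBid x (unitTrades p U V) = U.count x := by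
  rw [QtyBid, sum_quantity_filter_unitTrades, unitTrades, List.countP_map, List.count_eq_countP]
  conv_rhs => rw [← List.map_fst_zip h, List.countP_map]
  rfl

theorem qtyAsk_unitTrades (h : V.length ≤ U.length) (y : Ask) :
    QtyAsk y (unitTrades p U V) = V.count y := by
  rw [QtyAsk, sum_quantity_filter_unitTrades, unitTrades, List.countP_map, List.count_eq_countP]
  conv_rhs => rw [← List.map_snd_zip h, List.countP_map]
  rfl

theorem qtyBidAsk_unitTrades (x : Bid) (y : Ask) :
    QtyBidAsk x y (unitTrades p U V) = (U.zip V).countP fun z => z.1 == x && z.2 == y := by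
  rw [QtyBidAsk, sum_quantity_filter_unitTrades, unitTrades, List.countP_map]
  rfl

theorem isUniform_unitTrades : IsUniform (unitTrades p U V) := by
  intro m₁ hm₁ m₂ hm₂
  rw [(mem_unitTrades p U V hm₁).2.2, (mem_unitTrades p U V hm₂).2.2]

theorem isIR_unitTrades (hU : ∀ x ∈ U, p ≤ x.price) (hV : ∀ y ∈ V, y.price ≤ p) :
    IsIR (unitTrades p U V) := by
  intro m hm
  obtain ⟨hmU, hmV, hmp⟩ := mem_unitTrades p U V hm
  exact hmp ▸ ⟨hV _ hmV, hU _ hmU⟩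

theorem matching_unitTrades {B : List Bid} {A : List Ask} (hUV : U.length = V.length)
    (hU : ∀ x ∈ U, x ∈ B ∧ p ≤ x.price) (hV : ∀ y ∈ V, y ∈ A ∧ y.price ≤ p)
    (hUB : ∀ x ∈ B, U.count x ≤ x.quantity) (hVA : ∀ y ∈ A, V.count y ≤ y.quantity) :
    Matching B A (unitTrades p U V) := by
  have hIR := isIR_unitTrades p U V (fun x hx => (hU x hx).2) fun y hy => (hV y hy).2
  refine ⟨fun m hm => (hIR m hm).1.trans (hIR m hm).2,
    fun m hm => (hU _ (mem_unitTrades p U V hm).1).1,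
    fun m hm => (hV _ (mem_unitTrades p U V hm).2.1).1, fun x hx => ?_, fun y hy => ?_⟩
  · rw [qtyBid_unitTrades p U V hUV.le]; exact hUB x hx
  · rw [qtyAsk_unitTrades p U V hUV.ge]; exact hVA y hy

end UnitTrades

theorem prioritize_units_spec {γ : Type*} [DecidableEq γ] (f : Transaction → γ)
    {M : List Transaction} {S : List γ} {P : γ → Prop} {cap : γ → ℕ} {x : γ} {k : ℕ}
    (hMS : ∀ m ∈ M, f m ∈ S ∧ P (f m)) (hcap : ∀ y ∈ S, (units f M).count y ≤ cap y)
    (hx : x ∈ S ∧ P x) (hxk : (units f M).count x ≤ k) (hkM : k ≤ Qty M)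
    (hkx : k ≤ cap x) :
    ((units f M).prioritize x k).length = Qty M ∧
      (∀ y ∈ (units f M).prioritize x k, y ∈ S ∧ P y) ∧
      ∀ y ∈ S, ((units f M).prioritize x k).count y ≤ cap y := by
  refine ⟨?_, fun y hy => ?_, fun y hy => ?_⟩
  · rw [List.length_prioritize hxk (length_units f M ▸ hkM), length_units]
  · rcases List.mem_prioritize hy with rfl | hy
    · exact hx
    · obtain ⟨m, hm, rfl⟩ := exists_of_mem_units f M hy
      exact hMS m hm
  · by_cases hyx : y = x
    · rwa [hyx, List.count_prioritize_self]
    · exact (List.count_prioritize_of_ne hyx k _).trans (hcap y hy)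

theorem Matching.exists_uniform_of_clearing_price {B : List Bid} {A : List Ask}
    {M : List Transaction} {b : Bid} {a : Ask} {p : ℕ} (hM : Matching B A M)
    (hp : ∀ m ∈ M, m.ask.price ≤ p ∧ p ≤ m.bid.price) (hb : b ∈ B) (hbp : p ≤ b.price)
    (ha : a ∈ A) (hap : a.price ≤ p) (hQ : min b.quantity a.quantity ≤ Qty M) :
    ∃ M', Matching B A M' ∧ IsIR M' ∧ IsUniform M' ∧ Qty M' = Qty M ∧
      QtyBidAsk b a M' = min b.quantity a.quantity := by
  obtain ⟨-, hMB, hMA, hMb, hMa⟩ := hM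
  have hcb : ∀ x, (units Transaction.bid M).count x = QtyBid x M := count_units _ M
  have hca : ∀ y, (units Transaction.ask M).count y = QtyAsk y M := count_units _ M
  have hbM : QtyBid b M ≤ Qty M :=
    hcb b ▸ length_units Transaction.bid M ▸ List.count_le_length
  have haM : QtyAsk a M ≤ Qty M :=
    hca a ▸ length_units Transaction.ask M ▸ List.count_le_length
  have hbq := hMb b hb
  have haq := hMa a ha
  obtain ⟨hUlen, hUB, hUcap⟩ := prioritize_units_spec Transaction.bid (P := (p ≤ ·.price))
    (k := max (QtyBid b M) (min b.quantity a.quantity)) (fun m hm => ⟨hMB m hm, (hp m hm).2⟩)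
    (fun y hy => (hcb y).trans_le (hMb y hy)) ⟨hb, hbp⟩ ((hcb b).trans_le (le_max_left _ _))
    (by omega) (by omega)
  obtain ⟨hVlen, hVA, hVcap⟩ := prioritize_units_spec Transaction.ask (P := (·.price ≤ p))
    (k := max (QtyAsk a M) (min b.quantity a.quantity)) (fun m hm => ⟨hMA m hm, (hp m hm).1⟩)
    (fun y hy => (hca y).trans_le (hMa y hy)) ⟨ha, hap⟩ ((hca a).trans_le (le_max_left _ _))
    (by omega) (by omega)
  have hUV := hUlen.trans hVlen.symm
  refine ⟨unitTrades p _ _, matching_unitTrades p _ _ hUV hUB hVA hUcap hVcap,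
    isIR_unitTrades p _ _ (fun x hx => (hUB x hx).2) (fun y hy => (hVA y hy).2),
    isUniform_unitTrades p _ _, (qty_unitTrades p _ _ hUV).trans hUlen, ?_⟩
  rw [qtyBidAsk_unitTrades, List.countP_zip_prioritize]
  omega

theorem price_le_of_pairwise_bidGE {b x : Bid} {B' : List Bid}
    (hs : List.Pairwise BidGE (b :: B')) (hx : x ∈ b :: B') : x.price ≤ b.price := by
  rcases List.mem_cons.1 hx with rfl | hx
  · exact le_rfl
  · have := (List.pairwise_cons.1 hs).1 x hx
    simp only [BidGE, MoreCompetitiveBid, not_or] at this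
    exact not_lt.1 this.1

theorem price_le_of_pairwise_askGE {a y : Ask} {A' : List Ask}
    (hs : List.Pairwise AskGE (a :: A')) (hy : y ∈ a :: A') : a.price ≤ y.price := by
  rcases List.mem_cons.1 hy with rfl | hy
  · exact le_rfl
  · have := (List.pairwise_cons.1 hs).1 y hy
    simp only [AskGE, MoreCompetitiveAsk, not_or] at this
    exact not_lt.1 this.1

theorem statement_12_general (b : Bid) (B' : List Bid) (a : Ask) (A' : List Ask)
    (M : List Transaction)
    (hsB : List.Pairwise BidGE (b :: B')) (hsA : List.Pairwise AskGE (a :: A'))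
    (hM : Matching (b :: B') (a :: A') M) (hIR : IsIR M) (hU : IsUniform M)
    (hQ : min b.quantity a.quantity ≤ Qty M) :
    ∃ M', Matching (b :: B') (a :: A') M' ∧ IsIR M' ∧ IsUniform M' ∧
      Qty M' = Qty M ∧ QtyBidAsk b a M' = min b.quantity a.quantity := by
  by_cases hM₀ : M = []
  · subst hM₀
    exact ⟨[], hM, hIR, hU, rfl, (Nat.le_zero.1 hQ).symm⟩
  obtain ⟨m₀, hm₀⟩ := List.exists_mem_of_ne_nil M hM₀
  have hp : ∀ m ∈ M, m.ask.price ≤ m₀.price ∧ m₀.price ≤ m.bid.price :=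
    fun m hm => hU m hm m₀ hm₀ ▸ hIR m hm
  have hbp : m₀.price ≤ b.price :=
    (hp m₀ hm₀).2.trans (price_le_of_pairwise_bidGE hsB (hM.2.1 m₀ hm₀))
  have hap : a.price ≤ m₀.price :=
    (price_le_of_pairwise_askGE hsA (hM.2.2.1 m₀ hm₀)).trans (hp m₀ hm₀).1
  exact hM.exists_uniform_of_clearing_price hp List.mem_cons_self hbp List.mem_cons_self hap hQ

theorem statement_12 (b : Bid) (B' : List Bid) (a : Ask) (A' : List Ask)
    (M : List Transaction)
    (hB : (((b :: B').map Bid.id)).Nodup) (hA : (((a :: A').map Ask.id)).Nodup)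
    (hsB : List.Pairwise BidGE (b :: B')) (hsA : List.Pairwise AskGE (a :: A'))
    (hM : Matching (b :: B') (a :: A') M) (hIR : IsIR M) (hU : IsUniform M)
    (hQ : min b.quantity a.quantity ≤ Qty M) :
    ∃ M', Matching (b :: B') (a :: A') M' ∧ IsIR M' ∧ IsUniform M' ∧
      Qty M' = Qty M ∧ QtyBidAsk b a M' = min b.quantity a.quantity :=
  statement_12_general b B' a A' M hsB hsA hM hIR hU hQ
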